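/- arXiv:0901.3053 — 2 statements merged into one kernel-verified Lean document; each statement's English description precedes it below -/
import Mathlib

section
/- Rayleigh's monotonicity law: if c₁ ≤ c₂ pointwise are conductances such that (𝒳,c₁) and (𝒳,c₂) are both finite electrical networks, then for any disjoint nonempty subsets A and B of 𝒳 the effective conductances satisfy C₁(A,B) ≤ C₂(A,B). -/
/-- `HitPath A B t` : the finite trajectory `t` ends in `A` and all its earlier
states avoid `A ∪ B`; it realizes the event "the walk hits `A` (strictly) before `B`". -/
def HitPath {X : Type*} (A B : Set X) (t : List X) : Prop :=
  ∃ t' z, t = t' ++ [z] ∧ z ∈ A ∧ ∀ w ∈ t', w ∉ A ∪ B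

/-- Probability weight of the finite trajectory `x :: l` for the chain with
transition probabilities `p`. -/
noncomputable def pathWtR {X : Type*} (p : X → X → ℝ) : X → List X → ℝ
  | _, [] => 1
  | x, y :: l => p x y * pathWtR p y l

open Classical in
/-- `P_x(τ_A < τ_B)`. -/
noncomputable def hitProbR {X : Type*} (p : X → X → ℝ) (A B : Set X) (x : X) : ℝ :=
  ∑' l : List X, if HitPath A B (x :: l) then pathWtR p x l else 0

open Classical in
/-- `P_a(τ_A⁺ > τ_B⁺)`: at positive times the walk hits `B` strictly before `A`. -/
noncomputable def escProbR {X : Type*} (p : X → X → ℝ) (A B : Set X) (a : X) : ℝ :=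
  ∑' l : List X, if HitPath B A l then pathWtR p a l else 0

/-- total conductance (weight) at `x`. -/
noncomputable def degR {X : Type*} [Fintype X] (c : X → X → ℝ) (x : X) : ℝ := ∑ y, c x y

/-- transition probabilities of the random walk associated with the network. -/
noncomputable def transPR {X : Type*} [Fintype X] (c : X → X → ℝ) (x y : X) : ℝ :=
  c x y / degR c x

/-- The positive-conductance graph of the network is connected. -/
def NetConnectedR {X : Type*} (c : X → X → ℝ) : Prop :=
  ∀ x y : X, Relation.ReflTransGen (fun u v => 0 < c u v) x y

/-- Dirichlet form `𝒟(f) = ½ Σ_{x,y} c(x,y)(f(x)−f(y))²`. -/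
noncomputable def dirichletR {X : Type*} [Fintype X] (c : X → X → ℝ) (f : X → ℝ) : ℝ :=
  (1 / 2) * ∑ x, ∑ y, c x y * (f x - f y) ^ 2

/-! The Dirichlet form is monotone in the conductances, so the infimum over the same set of
admissible potentials can only grow; nonnegativity of `c₁` makes the smaller infimum a genuine
one. If no potential is admissible, both infima are `sInf ∅`. -/

open Set

theorem csInf_image_le_csInf_image {α β : Type*} [ConditionallyCompleteLattice β]
    {f g : α → β} {s : Set α} (hf : BddBelow (f '' s)) (hfg : ∀ x ∈ s, f x ≤ g x) :
    sInf (f '' s) ≤ sInf (g '' s) := by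
  rw [image_eq_range] at hf
  rw [image_eq_range, image_eq_range]
  exact ciInf_mono hf fun x => hfg x x.2

section Dirichlet

variable {X : Type*} [Fintype X]

theorem dirichletR_nonneg {c : X → X → ℝ} (hc : ∀ x y, 0 ≤ c x y) (f : X → ℝ) :
    0 ≤ dirichletR c f := by
  unfold dirichletR
  exact mul_nonneg (by norm_num) <| Finset.sum_nonneg fun x _ =>
    Finset.sum_nonneg fun y _ => mul_nonneg (hc x y) (sq_nonneg _)

theorem dirichletR_mono {c₁ c₂ : X → X → ℝ} (hle : ∀ x y, c₁ x y ≤ c₂ x y) (f : X → ℝ) :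
    dirichletR c₁ f ≤ dirichletR c₂ f := by
  unfold dirichletR
  gcongr with x _ y _
  exact hle x y

end Dirichlet

theorem rayleigh_monotonicity_general
    {X : Type*} [Fintype X] (c₁ c₂ : X → X → ℝ)
    (hnn₁ : ∀ x y, 0 ≤ c₁ x y)
    (hle : ∀ x y, c₁ x y ≤ c₂ x y)
    (A B : Finset X) :
    sInf ((fun f : X → ℝ => dirichletR c₁ f) ''
        {f | (∀ a ∈ A, f a = 1) ∧ (∀ b ∈ B, f b = 0)})
      ≤ sInf ((fun f : X → ℝ => dirichletR c₂ f) ''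
        {f | (∀ a ∈ A, f a = 1) ∧ (∀ b ∈ B, f b = 0)}) :=
  csInf_image_le_csInf_image
    ⟨0, forall_mem_image.2 fun f _ => dirichletR_nonneg hnn₁ f⟩
    fun f _ => dirichletR_mono hle f

/-- Rayleigh's monotonicity law: if `c₁ ≤ c₂` pointwise are
conductances making `(𝒳,c₁)` and `(𝒳,c₂)` finite electrical networks, then for any
disjoint nonempty `A`, `B` the effective conductances
`C(A,B) = inf{𝒟_c(f) : f ≡ 1 on A, f ≡ 0 on B}` satisfy `C₁(A,B) ≤ C₂(A,B)`. -/
theorem rayleigh_monotonicity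
    {X : Type*} [Fintype X] (c₁ c₂ : X → X → ℝ)
    (hnn₁ : ∀ x y, 0 ≤ c₁ x y) (hsymm₁ : ∀ x y, c₁ x y = c₁ y x)
    (hpos₁ : ∀ x, 0 < degR c₁ x) (hconn₁ : NetConnectedR c₁)
    (hnn₂ : ∀ x y, 0 ≤ c₂ x y) (hsymm₂ : ∀ x y, c₂ x y = c₂ y x)
    (hpos₂ : ∀ x, 0 < degR c₂ x) (hconn₂ : NetConnectedR c₂)
    (hle : ∀ x y, c₁ x y ≤ c₂ x y)
    (A B : Finset X) (hA : A.Nonempty) (hB : B.Nonempty) (hdisj : Disjoint A B) :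
    sInf ((fun f : X → ℝ => dirichletR c₁ f) ''
        {f | (∀ a ∈ A, f a = 1) ∧ (∀ b ∈ B, f b = 0)})
      ≤ sInf ((fun f : X → ℝ => dirichletR c₂ f) ''
        {f | (∀ a ∈ A, f a = 1) ∧ (∀ b ∈ B, f b = 0)}) :=
  rayleigh_monotonicity_general c₁ c₂ hnn₁ hle A B
end

section
/- Thomson's principle: for a finite electrical network (𝒳,c) and disjoint nonempty subsets A, B of 𝒳, the effective resistance satisfies R(A,B) = min{𝒟(φ) : φ a unitary flow from A to B}, and the minimum is attained at the unit current flow i_{A,B} = −c∇V_{A,B}/C(A,B) and at no other unitary flow. -/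
/-- `φ` is a unitary flow from `A` to `B`: an antisymmetric function supported on the
edges, with nonnegative divergence on `A`, nonpositive divergence on `B`, zero
divergence off `A ∪ B`, and total strength `Σ_{a∈A} div_a φ = 1`. -/
def IsUnitFlowR {X : Type*} [Fintype X] (c : X → X → ℝ) (A B : Finset X)
    (φ : X → X → ℝ) : Prop :=
  (∀ u v, φ v u = -φ u v) ∧ (∀ u v, c u v = 0 → φ u v = 0) ∧
    (∀ a ∈ A, 0 ≤ ∑ v, φ a v) ∧ (∀ b ∈ B, (∑ v, φ b v) ≤ 0) ∧
    (∀ z, z ∉ A → z ∉ B → (∑ v, φ z v) = 0) ∧ (∑ a ∈ A, ∑ v, φ a v) = 1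

/-- Energy dissipated by a flow: `𝒟(φ) = ½ Σ_{e∈ℰ} r(e) φ(e)²` with `r(e) = 1/c(e)`. -/
noncomputable def flowEnergyR {X : Type*} [Fintype X] (c : X → X → ℝ) (φ : X → X → ℝ) : ℝ :=
  (1 / 2) * ∑ u, ∑ v, if 0 < c u v then φ u v ^ 2 / c u v else 0

/-!
Summation by parts: for an antisymmetric `φ` that is divergence-free off `A ∪ B` and a potential
`V` equal to `1` on `A` and `0` on `B`, `∑ φ(u,v) (V u - V v) = 2 · (strength of φ)`. For
`φ = c∇V`, with `V` harmonic off `A ∪ B`, this says the strength of `c∇V` is `C(A,B) = 𝒟(V)`, so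
`i = c∇V / C(A,B)` is a unit flow. For the difference of two unit flows it says that `φ - i` is
orthogonal to `i` for the energy, whence `𝒟(φ) = 𝒟(i) + 𝒟(φ - i) = 1 / C(A,B) + 𝒟(φ - i)`, and
`𝒟(φ - i) = 0` forces `φ = i`.

That `V(x) = P_x(τ_A < τ_B)` is such a potential with values in `[0, 1]` comes from its
path-sum definition: the trajectories hitting `A` before `B` form a prefix-free family, and a
prefix-free family has total weight at most `1` under a substochastic kernel.
-/

open Finset

section PathWeights

variable {X : Type*} {p : X → X → ℝ}

lemma pathWtR_nonneg (hp : ∀ a b, 0 ≤ p a b) : ∀ (x : X) (l : List X), 0 ≤ pathWtR p x l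
  | _, [] => zero_le_one
  | x, y :: l => mul_nonneg (hp x y) (pathWtR_nonneg hp y l)

lemma sum_pathWtR_eq_sum_preimage_cons [Fintype X] {S : Finset (List X)} (hS : [] ∉ S)
    (x : X) :
    ∑ l ∈ S, pathWtR p x l =
      ∑ y, p x y * ∑ l ∈ S.preimage (List.cons y) List.cons_injective.injOn, pathWtR p y l := by
  classical
  have hfiber : ∀ y, ∑ l ∈ S.preimage (List.cons y) List.cons_injective.injOn,
      p x y * pathWtR p y l = ∑ l ∈ S, if l.head? = some y then pathWtR p x l else 0 :=
    fun y => by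
      rw [← sum_preimage _ S List.cons_injective.injOn _ fun l _ hl => if_neg fun h => hl (by
        obtain ⟨t, rfl⟩ := List.head?_eq_some_iff.mp h; exact ⟨t, rfl⟩)]
      simp [pathWtR]
  simp_rw [mul_sum, hfiber]
  rw [sum_comm]
  refine sum_congr rfl fun l hl => ?_
  obtain ⟨y, t, rfl⟩ := List.exists_cons_of_ne_nil (ne_of_mem_of_not_mem hl hS)
  simp

lemma sum_pathWtR_le_one_of_subset_nil (hp : ∀ a b, 0 ≤ p a b) {S : Finset (List X)}
    (hS : S ⊆ {[]}) (x : X) : ∑ l ∈ S, pathWtR p x l ≤ 1 :=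
  calc ∑ l ∈ S, pathWtR p x l ≤ ∑ l ∈ {[]}, pathWtR p x l :=
        sum_le_sum_of_subset_of_nonneg hS fun l _ _ => pathWtR_nonneg hp x l
    _ = 1 := by simp [pathWtR]

lemma sum_pathWtR_le_one_of_isAntichain [Fintype X] (hp : ∀ a b, 0 ≤ p a b)
    (hrow : ∀ a, ∑ b, p a b ≤ 1) {S : Finset (List X)}
    (hS : IsAntichain (· <+: ·) (S : Set (List X))) (x : X) :
    ∑ l ∈ S, pathWtR p x l ≤ 1 := by
  suffices ∀ n (S : Finset (List X)), (∀ l ∈ S, l.length ≤ n) →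
      IsAntichain (· <+: ·) (S : Set (List X)) → ∀ x, ∑ l ∈ S, pathWtR p x l ≤ 1 from
    this _ S (fun l hl => le_sup (f := List.length) hl) hS x
  intro n
  induction n with
  | zero =>
    intro S hlen _ x
    exact sum_pathWtR_le_one_of_subset_nil hp (fun l hl => by simpa using hlen l hl) x
  | succ n ih =>
    intro S hlen hS x
    by_cases hnil : [] ∈ S
    · exact sum_pathWtR_le_one_of_subset_nil hp
        (fun l hl => mem_singleton.mpr (hS.eq hnil hl List.nil_prefix).symm) x
    rw [sum_pathWtR_eq_sum_preimage_cons hnil]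
    refine (sum_le_sum fun y _ => ?_).trans (hrow x)
    refine mul_le_of_le_one_right (hp x y) (ih _ (fun l hl => ?_) (fun l₁ h₁ l₂ h₂ hne h => ?_) y)
    · have := hlen _ (mem_preimage.mp hl)
      simp only [List.length_cons] at this
      omega
    · exact hS (mem_preimage.mp h₁) (mem_preimage.mp h₂) (by simpa using hne)
        (List.cons_prefix_cons.mpr ⟨rfl, h⟩)

end PathWeights

section HitPath

variable {X : Type*} {A B : Set X}

lemma not_hitPath_nil : ¬ HitPath A B ([] : List X) := by
  rintro ⟨t, z, h, -⟩
  simp at h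

lemma hitPath_cons_iff {x : X} {l : List X} :
    HitPath A B (x :: l) ↔ (l = [] ∧ x ∈ A) ∨ (x ∉ A ∪ B ∧ HitPath A B l) := by
  constructor
  · rintro ⟨_ | ⟨w, t⟩, z, h, hz, havoid⟩
    · obtain ⟨rfl, rfl⟩ := List.cons_eq_cons.mp h
      exact .inl ⟨rfl, hz⟩
    · obtain ⟨rfl, rfl⟩ := List.cons_eq_cons.mp h
      exact .inr ⟨havoid _ (List.mem_cons_self ..),
        ⟨t, z, rfl, hz, fun w hw => havoid w (List.mem_cons_of_mem _ hw)⟩⟩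
  · rintro (⟨rfl, hx⟩ | ⟨hx, t, z, rfl, hz, havoid⟩)
    · exact ⟨[], x, rfl, hx, by simp⟩
    · exact ⟨x :: t, z, rfl, hz, List.forall_mem_cons.mpr ⟨hx, havoid⟩⟩

lemma HitPath.eq_of_prefix {t₁ t₂ : List X} (h₁ : HitPath A B t₁) (h₂ : HitPath A B t₂)
    (hpre : t₁ <+: t₂) : t₁ = t₂ := by
  induction t₁ generalizing t₂ with
  | nil => exact absurd h₁ not_hitPath_nil
  | cons x l ih =>
    obtain ⟨m, rfl⟩ : ∃ m, t₂ = x :: m := by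
      obtain ⟨r, rfl⟩ := hpre; exact ⟨l ++ r, rfl⟩
    rcases hitPath_cons_iff.mp h₁ with ⟨rfl, hx⟩ | ⟨hx, hl⟩
    · rcases hitPath_cons_iff.mp h₂ with ⟨rfl, -⟩ | ⟨hx', -⟩
      · rfl
      · exact absurd (Set.mem_union_left B hx) hx'
    · rcases hitPath_cons_iff.mp h₂ with ⟨rfl, hx'⟩ | ⟨-, hm⟩
      · exact absurd (Set.mem_union_left B hx') hx
      · rw [ih hl hm (List.cons_prefix_cons.mp hpre).2]

end HitPath

section HitProbability

variable {X : Type*} {p : X → X → ℝ} {A B : Set X}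

open Classical in
noncomputable def hitWeight (p : X → X → ℝ) (A B : Set X) (x : X) (l : List X) : ℝ :=
  if HitPath A B (x :: l) then pathWtR p x l else 0

lemma hitProbR_eq_tsum_hitWeight (x : X) : hitProbR p A B x = ∑' l, hitWeight p A B x l := rfl

lemma hitWeight_nonneg (hp : ∀ a b, 0 ≤ p a b) (x : X) (l : List X) :
    0 ≤ hitWeight p A B x l := by
  unfold hitWeight
  split_ifs
  exacts [pathWtR_nonneg hp x l, le_rfl]

lemma sum_hitWeight_le_one [Fintype X] (hp : ∀ a b, 0 ≤ p a b) (hrow : ∀ a, ∑ b, p a b ≤ 1)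
    (x : X) (T : Finset (List X)) : ∑ l ∈ T, hitWeight p A B x l ≤ 1 := by
  classical
  simp only [hitWeight]
  rw [← sum_filter]
  refine sum_pathWtR_le_one_of_isAntichain hp hrow (fun l₁ h₁ l₂ h₂ hne hpre => hne ?_) x
  exact List.cons_injective ((mem_filter.mp h₁).2.eq_of_prefix (mem_filter.mp h₂).2
    (List.cons_prefix_cons.mpr ⟨rfl, hpre⟩))

lemma summable_hitWeight [Fintype X] (hp : ∀ a b, 0 ≤ p a b) (hrow : ∀ a, ∑ b, p a b ≤ 1)
    (x : X) : Summable (hitWeight p A B x) :=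
  summable_of_sum_le (hitWeight_nonneg hp x) (sum_hitWeight_le_one hp hrow x)

lemma hitProbR_nonneg (hp : ∀ a b, 0 ≤ p a b) (x : X) : 0 ≤ hitProbR p A B x :=
  tsum_nonneg (hitWeight_nonneg hp x)

lemma hitProbR_le_one [Fintype X] (hp : ∀ a b, 0 ≤ p a b) (hrow : ∀ a, ∑ b, p a b ≤ 1)
    (x : X) : hitProbR p A B x ≤ 1 :=
  Real.tsum_le_of_sum_le (hitWeight_nonneg hp x) (sum_hitWeight_le_one hp hrow x)

lemma hitProbR_of_mem_left {a : X} (ha : a ∈ A) : hitProbR p A B a = 1 := by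
  rw [hitProbR_eq_tsum_hitWeight, tsum_eq_single []]
  · simp [hitWeight, hitPath_cons_iff, ha, pathWtR]
  · intro l hl
    simp [hitWeight, hitPath_cons_iff, hl, ha]

lemma hitProbR_of_mem_right {b : X} (hb : b ∈ B) (hbA : b ∉ A) : hitProbR p A B b = 0 := by
  rw [hitProbR_eq_tsum_hitWeight]
  convert tsum_zero with l
  simp [hitWeight, hitPath_cons_iff, hb, hbA]

lemma hitWeight_cons {x : X} (hx : x ∉ A ∪ B) (y : X) (l : List X) :
    hitWeight p A B x (y :: l) = p x y * hitWeight p A B y l := by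
  have hiff : HitPath A B (x :: y :: l) ↔ HitPath A B (y :: l) := by
    simp [hitPath_cons_iff (l := y :: l), hx]
  by_cases h : HitPath A B (y :: l)
  · simp [hitWeight, h, hiff.mpr h, pathWtR]
  · simp [hitWeight, h, mt hiff.mp h]

lemma hitProbR_eq_sum [Fintype X] (hp : ∀ a b, 0 ≤ p a b) (hrow : ∀ a, ∑ b, p a b ≤ 1)
    {x : X} (hx : x ∉ A ∪ B) :
    hitProbR p A B x = ∑ y, p x y * hitProbR p A B y := by
  have hxA : x ∉ A := fun h => hx (.inl h)
  have hinj : Function.Injective fun q : X × List X => q.1 :: q.2 :=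
    fun _ _ h => by obtain ⟨h₁, h₂⟩ := List.cons_eq_cons.mp h; exact Prod.ext h₁ h₂
  have hsupp : Function.support (hitWeight p A B x) ⊆ Set.range fun q : X × List X => q.1 :: q.2
    | [], h => absurd (by simp [hitWeight, hitPath_cons_iff, not_hitPath_nil, hxA]) h
    | y :: l, _ => ⟨(y, l), rfl⟩
  have hsum := (summable_hitWeight (A := A) (B := B) hp hrow x).comp_injective hinj
  calc hitProbR p A B x = ∑' q : X × List X, hitWeight p A B x (q.1 :: q.2) :=
        (hinj.tsum_eq hsupp).symm
    _ = ∑' (y) (l), hitWeight p A B x (y :: l) :=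
        hsum.tsum_prod' fun y => hsum.comp_injective (Prod.mk_right_injective y)
    _ = ∑ y, p x y * hitProbR p A B y := by
        simp_rw [hitWeight_cons hx, tsum_mul_left, tsum_fintype, hitProbR_eq_tsum_hitWeight]

end HitProbability

lemma Relation.ReflTransGen.exists_rel_ne {α β : Type*} {r : α → α → Prop} {f : α → β}
    {a b : α} (h : Relation.ReflTransGen r a b) (hne : f a ≠ f b) : ∃ u v, r u v ∧ f u ≠ f v := by
  induction h with
  | refl => exact absurd rfl hne
  | @tail m b _ hmb ih =>
    by_cases hfm : f m = f b
    · exact ih (hfm ▸ hne)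
    · exact ⟨m, b, hmb, hfm⟩

section Network

variable {X : Type*} [Fintype X] {c : X → X → ℝ}

lemma transPR_nonneg (hnn : ∀ x y, 0 ≤ c x y) (hpos : ∀ x, 0 < degR c x) (x y : X) :
    0 ≤ transPR c x y :=
  div_nonneg (hnn x y) (hpos x).le

lemma sum_transPR {x : X} (hpos : 0 < degR c x) : ∑ y, transPR c x y = 1 := by
  simp only [transPR, ← sum_div]
  exact div_self hpos.ne'

lemma sum_mul_sub_eq_zero_of_eq_sum_transPR {x : X} (hpos : 0 < degR c x) {f : X → ℝ}
    (hf : f x = ∑ y, transPR c x y * f y) : ∑ y, c x y * (f x - f y) = 0 := by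
  have hmean : ∑ y, c x y * f y = degR c x * f x := by
    simp only [hf, mul_sum, transPR]
    exact sum_congr rfl fun y _ => by field_simp
  simp only [mul_sub, sum_sub_distrib, ← sum_mul, hmean, degR, sub_self]

lemma sum_sum_mul_sub_of_antisymm {ψ : X → X → ℝ} (hψ : ∀ u v, ψ v u = -ψ u v) (f : X → ℝ) :
    ∑ u, ∑ v, ψ u v * (f u - f v) = 2 * ∑ u, f u * ∑ v, ψ u v := by
  have hswap : ∑ u, ∑ v, ψ u v * f v = -∑ u, ∑ v, ψ u v * f u := by
    rw [sum_comm, ← sum_neg_distrib]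
    exact sum_congr rfl fun u _ => by
      rw [← sum_neg_distrib]; exact sum_congr rfl fun v _ => by rw [hψ]; ring
  have hmul : ∑ u, f u * ∑ v, ψ u v = ∑ u, ∑ v, ψ u v * f u :=
    sum_congr rfl fun u _ => by rw [mul_sum]; exact sum_congr rfl fun v _ => mul_comm _ _
  simp only [mul_sub, sum_sub_distrib, hswap, hmul]
  ring

variable {A B : Finset X} {V : X → ℝ}

lemma sum_sum_mul_sub_eq_two_mul_sum_div (hVA : ∀ a ∈ A, V a = 1) (hVB : ∀ b ∈ B, V b = 0)
    {ψ : X → X → ℝ} (hψ : ∀ u v, ψ v u = -ψ u v)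
    (hdiv : ∀ z, z ∉ A → z ∉ B → ∑ v, ψ z v = 0) :
    ∑ u, ∑ v, ψ u v * (V u - V v) = 2 * ∑ a ∈ A, ∑ v, ψ a v := by
  classical
  have hterm : ∀ u, V u * ∑ v, ψ u v = if u ∈ A then ∑ v, ψ u v else 0 := fun u => by
    by_cases huA : u ∈ A
    · rw [if_pos huA, hVA u huA, one_mul]
    · by_cases huB : u ∈ B
      · rw [if_neg huA, hVB u huB, zero_mul]
      · rw [if_neg huA, hdiv u huA huB, mul_zero]
  rw [sum_sum_mul_sub_of_antisymm hψ, sum_congr rfl fun u _ => hterm u, sum_ite_mem, univ_inter]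

lemma IsUnitFlowR.sum_sum_mul_sub {φ : X → X → ℝ} (hφ : IsUnitFlowR c A B φ)
    (hVA : ∀ a ∈ A, V a = 1) (hVB : ∀ b ∈ B, V b = 0) :
    ∑ u, ∑ v, φ u v * (V u - V v) = 2 := by
  rw [sum_sum_mul_sub_eq_two_mul_sum_div hVA hVB hφ.1 hφ.2.2.2.2.1, hφ.2.2.2.2.2, mul_one]

lemma sum_sum_current_eq_dirichletR (hsymm : ∀ x y, c x y = c y x)
    (hVA : ∀ a ∈ A, V a = 1) (hVB : ∀ b ∈ B, V b = 0)
    (hharm : ∀ z, z ∉ A → z ∉ B → ∑ v, c z v * (V z - V v) = 0) :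
    ∑ a ∈ A, ∑ v, c a v * (V a - V v) = dirichletR c V := by
  have h := sum_sum_mul_sub_eq_two_mul_sum_div hVA hVB
    (fun u v => by rw [hsymm v u]; ring) hharm
  simp only [mul_assoc, ← pow_two] at h
  rw [dirichletR]
  linarith

end Network

section Energy

variable {X : Type*} [Fintype X] {c : X → X → ℝ}

lemma dirichletR_pos (hnn : ∀ x y, 0 ≤ c x y) {f : X → ℝ} {a b : X}
    (hab : Relation.ReflTransGen (fun u v => 0 < c u v) a b) (hne : f a ≠ f b) :
    0 < dirichletR c f := by
  obtain ⟨u, v, huv, hf⟩ := hab.exists_rel_ne hne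
  have hterm_nonneg : ∀ x y, 0 ≤ c x y * (f x - f y) ^ 2 := fun x y =>
    mul_nonneg (hnn x y) (sq_nonneg _)
  have hterm_pos : 0 < c u v * (f u - f v) ^ 2 :=
    mul_pos huv (sq_pos_of_ne_zero (sub_ne_zero.mpr hf))
  have hle : c u v * (f u - f v) ^ 2 ≤ ∑ x, ∑ y, c x y * (f x - f y) ^ 2 :=
    (single_le_sum (fun y _ => hterm_nonneg u y) (mem_univ v)).trans
      (single_le_sum (f := fun x => ∑ y, c x y * (f x - f y) ^ 2)
        (fun x _ => sum_nonneg fun y _ => hterm_nonneg x y) (mem_univ u))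
  rw [dirichletR]
  linarith

lemma flowEnergyR_nonneg (φ : X → X → ℝ) : 0 ≤ flowEnergyR c φ :=
  mul_nonneg one_half_pos.le <| sum_nonneg fun u _ => sum_nonneg fun v _ => by
    split_ifs with h
    exacts [div_nonneg (sq_nonneg _) h.le, le_rfl]

lemma eq_zero_of_flowEnergyR_eq_zero (hnn : ∀ x y, 0 ≤ c x y) {ψ : X → X → ℝ}
    (hsupp : ∀ u v, c u v = 0 → ψ u v = 0) (hψ : flowEnergyR c ψ = 0) : ψ = 0 := by
  have hterm : ∀ u v, 0 ≤ if 0 < c u v then ψ u v ^ 2 / c u v else 0 := fun u v => by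
    split_ifs with h
    exacts [div_nonneg (sq_nonneg _) h.le, le_rfl]
  have hsum : ∑ u, ∑ v, (if 0 < c u v then ψ u v ^ 2 / c u v else 0) = 0 := by
    rw [flowEnergyR] at hψ; linarith
  ext u v
  rcases (hnn u v).lt_or_eq with h | h
  · have hrow := congrFun ((Fintype.sum_eq_zero_iff_of_nonneg fun u =>
      sum_nonneg fun v _ => hterm u v).mp hsum) u
    have hentry := congrFun ((Fintype.sum_eq_zero_iff_of_nonneg (hterm u)).mp hrow) v
    simpa [h, h.ne'] using hentry
  · exact hsupp u v h.symm

end Energy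

section Thomson

variable {X : Type*} [Fintype X] {c : X → X → ℝ} {A B : Finset X} {V : X → ℝ}

noncomputable def unitCurrent (c : X → X → ℝ) (V : X → ℝ) (u v : X) : ℝ :=
  c u v * (V u - V v) / dirichletR c V

lemma flowEnergyR_unitCurrent_add (hnn : ∀ x y, 0 ≤ c x y) (V : X → ℝ) {ψ : X → X → ℝ}
    (hsupp : ∀ u v, c u v = 0 → ψ u v = 0) :
    flowEnergyR c (unitCurrent c V + ψ) = (dirichletR c V)⁻¹ + flowEnergyR c ψ +
      (∑ u, ∑ v, ψ u v * (V u - V v)) / dirichletR c V := by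
  set C := dirichletR c V with hC
  have hterm : ∀ u v, (if 0 < c u v then (unitCurrent c V + ψ) u v ^ 2 / c u v else 0) =
      c u v * (V u - V v) ^ 2 / C ^ 2 + (if 0 < c u v then ψ u v ^ 2 / c u v else 0) +
        2 * (ψ u v * (V u - V v)) / C := fun u v => by
    rcases (hnn u v).lt_or_eq with h | h
    · simp only [if_pos h, Pi.add_apply, unitCurrent, ← hC]
      field_simp
      ring
    · simp [← h, hsupp u v h.symm]
  have hCinv : C / C ^ 2 = C⁻¹ := by
    rcases eq_or_ne C 0 with h | h
    · simp [h]
    · field_simp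
  simp only [flowEnergyR, hterm, sum_add_distrib, ← sum_div, ← mul_sum]
  rw [← hCinv, hC, dirichletR]
  ring

lemma isUnitFlowR_unitCurrent (hnn : ∀ x y, 0 ≤ c x y) (hsymm : ∀ x y, c x y = c y x)
    (hV0 : ∀ x, 0 ≤ V x) (hV1 : ∀ x, V x ≤ 1) (hVA : ∀ a ∈ A, V a = 1)
    (hVB : ∀ b ∈ B, V b = 0) (hharm : ∀ z, z ∉ A → z ∉ B → ∑ v, c z v * (V z - V v) = 0)
    (hC : 0 < dirichletR c V) :
    IsUnitFlowR c A B (unitCurrent c V) := by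
  simp only [IsUnitFlowR, unitCurrent, ← sum_div]
  refine ⟨fun u v => by rw [hsymm v u]; ring, fun u v h => by simp [h], fun a ha => ?_,
    fun b hb => ?_, fun z hzA hzB => by rw [hharm z hzA hzB, zero_div], ?_⟩
  · refine div_nonneg (sum_nonneg fun v _ => mul_nonneg (hnn a v) ?_) hC.le
    linarith [hVA a ha, hV1 v]
  · refine div_nonpos_of_nonpos_of_nonneg (sum_nonpos fun v _ => ?_) hC.le
    rw [hVB b hb, zero_sub, mul_neg]
    exact neg_nonpos.mpr (mul_nonneg (hnn b v) (hV0 v))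
  · rw [sum_sum_current_eq_dirichletR hsymm hVA hVB hharm, div_self hC.ne']

theorem thomson_of_potential (hnn : ∀ x y, 0 ≤ c x y) (hsymm : ∀ x y, c x y = c y x)
    (hV0 : ∀ x, 0 ≤ V x) (hV1 : ∀ x, V x ≤ 1) (hVA : ∀ a ∈ A, V a = 1)
    (hVB : ∀ b ∈ B, V b = 0) (hharm : ∀ z, z ∉ A → z ∉ B → ∑ v, c z v * (V z - V v) = 0)
    (hC : 0 < dirichletR c V) :
    IsUnitFlowR c A B (unitCurrent c V)
    ∧ (∀ φ : X → X → ℝ, IsUnitFlowR c A B φ → (dirichletR c V)⁻¹ ≤ flowEnergyR c φ)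
    ∧ flowEnergyR c (unitCurrent c V) = (dirichletR c V)⁻¹
    ∧ (∀ φ : X → X → ℝ, IsUnitFlowR c A B φ → flowEnergyR c φ = (dirichletR c V)⁻¹ →
        φ = unitCurrent c V) := by
  set iAB := unitCurrent c V
  have hflow : IsUnitFlowR c A B iAB := isUnitFlowR_unitCurrent hnn hsymm hV0 hV1 hVA hVB hharm hC
  have hsupp : ∀ φ, IsUnitFlowR c A B φ → ∀ u v, c u v = 0 → (φ - iAB) u v = 0 :=
    fun φ hφ u v h => by simp [hφ.2.1 u v h, hflow.2.1 u v h]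
  have hdecomp : ∀ φ, IsUnitFlowR c A B φ →
      flowEnergyR c φ = (dirichletR c V)⁻¹ + flowEnergyR c (φ - iAB) := fun φ hφ => by
    have hcross : ∑ u, ∑ v, (φ - iAB) u v * (V u - V v) = 0 := by
      simp only [Pi.sub_apply, sub_mul, sum_sub_distrib]
      rw [hφ.sum_sum_mul_sub hVA hVB, hflow.sum_sum_mul_sub hVA hVB, sub_self]
    calc flowEnergyR c φ = flowEnergyR c (iAB + (φ - iAB)) := by rw [add_sub_cancel]
      _ = _ := by rw [flowEnergyR_unitCurrent_add hnn V (hsupp φ hφ), hcross, zero_div, add_zero]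
  have hEi : flowEnergyR c iAB = (dirichletR c V)⁻¹ := by
    simpa [flowEnergyR] using hdecomp iAB hflow
  refine ⟨hflow, fun φ hφ => ?_, hEi, fun φ hφ hE => ?_⟩
  · rw [hdecomp φ hφ]
    linarith [flowEnergyR_nonneg (c := c) (φ - iAB)]
  · have hzero : flowEnergyR c (φ - iAB) = 0 := by linarith [hdecomp φ hφ]
    exact sub_eq_zero.mp (eq_zero_of_flowEnergyR_eq_zero hnn (hsupp φ hφ) hzero)

end Thomson

/-- Thomson's principle: for a finite electrical network `(𝒳,c)` and
disjoint nonempty `A`, `B`, the effective resistance `R(A,B) = 1/C(A,B)`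
(`C(A,B) = 𝒟(V_{A,B})`, `V_{A,B}(x) = P_x(τ_A < τ_B)`) is the least energy of a
unitary flow from `A` to `B`, and the minimum is attained at the unit current flow
`i_{A,B} = −c∇V_{A,B}/C(A,B)` and at no other unitary flow. -/
theorem thomson_principle
    {X : Type*} [Fintype X] (c : X → X → ℝ)
    (hnn : ∀ x y, 0 ≤ c x y) (hsymm : ∀ x y, c x y = c y x)
    (hpos : ∀ x, 0 < degR c x) (hconn : NetConnectedR c)
    (A B : Finset X) (hA : A.Nonempty) (hB : B.Nonempty) (hdisj : Disjoint A B) :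
    letI V : X → ℝ := fun x => hitProbR (transPR c) (↑A : Set X) (↑B : Set X) x
    letI iAB : X → X → ℝ := fun u v => c u v * (V u - V v) / dirichletR c V
    IsUnitFlowR c A B iAB
    ∧ (∀ φ : X → X → ℝ, IsUnitFlowR c A B φ → (dirichletR c V)⁻¹ ≤ flowEnergyR c φ)
    ∧ flowEnergyR c iAB = (dirichletR c V)⁻¹
    ∧ (∀ φ : X → X → ℝ, IsUnitFlowR c A B φ → flowEnergyR c φ = (dirichletR c V)⁻¹ →
        φ = iAB) := by
  have hp := transPR_nonneg hnn hpos
  have hrow : ∀ x, ∑ y, transPR c x y ≤ 1 := fun x => (sum_transPR (hpos x)).le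
  have hVA : ∀ a ∈ A, hitProbR (transPR c) A B a = 1 := fun a ha =>
    hitProbR_of_mem_left (mem_coe.mpr ha)
  have hVB : ∀ b ∈ B, hitProbR (transPR c) A B b = 0 := fun b hb =>
    hitProbR_of_mem_right (mem_coe.mpr hb) (mem_coe.not.mpr (disjoint_right.mp hdisj hb))
  have hharm : ∀ z, z ∉ A → z ∉ B → ∑ v, c z v *
      (hitProbR (transPR c) A B z - hitProbR (transPR c) A B v) = 0 := fun z hzA hzB =>
    sum_mul_sub_eq_zero_of_eq_sum_transPR (hpos z) (hitProbR_eq_sum hp hrow (by simp [hzA, hzB]))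
  obtain ⟨a, ha⟩ := hA
  obtain ⟨b, hb⟩ := hB
  have hC : 0 < dirichletR c (hitProbR (transPR c) A B) :=
    dirichletR_pos hnn (hconn a b) (by rw [hVA a ha, hVB b hb]; exact one_ne_zero)
  exact thomson_of_potential hnn hsymm (hitProbR_nonneg hp) (hitProbR_le_one hp hrow) hVA hVB
    hharm hC
end
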